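/- arXiv:2210.04611 — 2 statements merged into one kernel-verified Lean document; each statement's English description precedes it below -/
import Mathlib

section
/- Let Q be a medial quandle whose orbits are Q_i for i in a nonempty index set I, fix i₀ ∈ I, and for each i ∈ I choose an element q_i ∈ Q_i. Let d_i = β_{q_i} β_{q_{i₀}}⁻¹ ∈ Dis(Q) and Fix(q_i) = {d ∈ Dis(Q) : d(q_i) = q_i}. Then, regarding the Λ-module Dis(Q) as both the ambient module M and the submodule N of the construction, the data (Dis(Q), (d_i)_{i∈I}, (Fix(q_i))_{i∈I}) satisfy the hypotheses of the construction, and Q is isomorphic as a quandle to Q(Dis(Q), (d_i), (Fix(q_i))). -/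
open LaurentPolynomial

set_option synthInstance.maxHeartbeats 1000000
set_option maxHeartbeats 1000000

noncomputable section

/-- The ring `Λ = ℤ[t,t⁻¹]` of Laurent polynomials with integer coefficients. -/
abbrev Λ : Type := LaurentPolynomial ℤ

/-- The variable `t ∈ Λ`. -/
abbrev tL : Λ := T 1

/-- A medial quandle structure on a type `Q`: an idempotent binary operation whose right
translations are bijections, satisfying the medial law. -/
structure MedialQuandleStr (Q : Type*) where
  op : Q → Q → Q
  idem : ∀ x, op x x = x
  bij : ∀ y, Function.Bijective fun x => op x y
  medial : ∀ w x y z, op (op w x) (op y z) = op (op w y) (op x z)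

/-- A quandle structure on a type `T`. -/
structure QuandleStr (T : Type*) where
  op : T → T → T
  idem : ∀ x, op x x = x
  bij : ∀ y, Function.Bijective fun x => op x y
  distrib : ∀ x y z, op (op x y) z = op (op x z) (op y z)

namespace MedialQuandleStr

variable {Q : Type*} (s : MedialQuandleStr Q)

/-- The translation `β_y : x ↦ x ▷ y`, as a permutation of `Q`. -/
def β (y : Q) : Equiv.Perm Q := Equiv.ofBijective _ (s.bij y)

/-- `β(Q)`: the subgroup of permutations generated by the translations. -/
def transGroup : Subgroup (Equiv.Perm Q) := Subgroup.closure (Set.range s.β)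

/-- The displacement group `Dis(Q)`, generated by the elementary displacements
`β_y β_z⁻¹`. -/
def Dis : Subgroup (Equiv.Perm Q) :=
  Subgroup.closure {d : Equiv.Perm Q | ∃ y z, d = s.β y * (s.β z)⁻¹}

/-- The orbit of `q`: the smallest subset of `Q` containing `q` and closed under the
action of `β(Q)`. -/
def orbit (q : Q) : Set Q := {x | ∃ g ∈ s.transGroup, g q = x}

end MedialQuandleStr

section Construction

variable {M : Type*} [AddCommGroup M] [Module Λ M] {I : Type*}

/-- The carrier of the quandle `Q(N,(m_i),(X_i))`: the disjoint union of the quotients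
`Q_i = N/X_i`. -/
def QCar (N : Submodule Λ M) (X : I → Submodule Λ ↥N) : Type _ :=
  Σ i : I, ↥N ⧸ X i

/-- The condition `(1-t)·X_i = 0` for all `i`. -/
def annCond (N : Submodule Λ M) (X : I → Submodule Λ ↥N) : Prop :=
  ∀ i, ∀ x ∈ X i, (1 - tL) • (x : ↥N) = 0

/-- Multiplication by `1-t`, descended from `N/X_j` to `N` (well defined since
`(1-t)·X_j = 0`). -/
def oneSubT (N : Submodule Λ M) {X : I → Submodule Λ ↥N} (h : annCond N X) (j : I) :
    (↥N ⧸ X j) →ₗ[Λ] ↥N :=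
  Submodule.liftQ (X j) ((1 - tL) • (LinearMap.id : ↥N →ₗ[Λ] ↥N))
    (fun x hx => by simpa using h j x hx)

/-- The operation of `Q(N,(m_i),(X_i))`: for `x ∈ Q_i` and `y ∈ Q_j`,
`x ▷ y = m_j - m_i + t·x + (1-t)·y + X_i ∈ Q_i`. -/
def qop (N : Submodule Λ M) (m : I → M) {X : I → Submodule Λ ↥N}
    (hm : ∀ i j, m i - m j ∈ N) (h : annCond N X) :
    QCar N X → QCar N X → QCar N X :=
  fun x y =>
    ⟨x.1, Submodule.Quotient.mk (⟨m y.1 - m x.1, hm y.1 x.1⟩ : ↥N)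
        + tL • x.2 + Submodule.Quotient.mk (oneSubT N h y.1 y.2)⟩

end Construction

/-!
Since `β_{g x} = g β_x g⁻¹` for every `g ∈ β(Q)` and `β_y x = (β_y β_x⁻¹) x`, the orbit of
`q_i` is its `Dis(Q)`-orbit, with stabiliser `Fix(q_i)`; so `d + Fix(q_i) ↦ d(q_i)` is a
bijection from `Dis(Q)/Fix(q_i)` onto the orbit. A displacement fixing `q_i` commutes with
`β_{q_i}`, which is `(1 - t)·Fix(q_i) = 0`. Writing `A`, `B` for the displacements of `x ∈ Q_i`
and `y ∈ Q_j`, the representative of `x ▷ y` is the displacement `B β_{q_j} B⁻¹ A β_{q_i}⁻¹`,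
which sends `q_i` to `β_{B q_j}(A q_i) = A q_i ▷ B q_j`.
-/

namespace MedialQuandleStr

variable {Q : Type*} (s : MedialQuandleStr Q)

@[simp]
lemma beta_apply (y x : Q) : s.β y x = s.op x y := rfl

lemma beta_inv_apply_self (y : Q) : (s.β y)⁻¹ y = y := by
  rw [Equiv.Perm.inv_eq_iff_eq]
  exact (s.idem y).symm

lemma op_op_right (x y z : Q) : s.op (s.op x y) z = s.op (s.op x z) (s.op y z) := by
  simpa only [s.idem] using s.medial x y z z

lemma beta_op (x y : Q) : s.β (s.op x y) = s.β y * s.β x * (s.β y)⁻¹ := by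
  rw [eq_mul_inv_iff_mul_eq]
  ext w
  exact (s.op_op_right w x y).symm

lemma beta_mem_transGroup (y : Q) : s.β y ∈ s.transGroup :=
  Subgroup.subset_closure ⟨y, rfl⟩

lemma Dis_le_transGroup : s.Dis ≤ s.transGroup := by
  rw [Dis, Subgroup.closure_le]
  rintro _ ⟨y, z, rfl⟩
  exact mul_mem (s.beta_mem_transGroup y) (inv_mem (s.beta_mem_transGroup z))

lemma beta_apply_eq_conj {g : Equiv.Perm Q} (hg : g ∈ s.transGroup) (x : Q) :
    s.β (g x) = g * s.β x * g⁻¹ := by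
  induction hg using Subgroup.closure_induction generalizing x with
  | mem _ h =>
    obtain ⟨y, rfl⟩ := h
    exact s.beta_op x y
  | one => simp
  | mul a b _ _ ha hb =>
    rw [Equiv.Perm.mul_apply, ha, hb]
    group
  | inv a _ ha =>
    have h := ha (a⁻¹ x)
    rw [show a (a⁻¹ x) = x from a.apply_symm_apply x] at h
    rw [h]
    group

lemma commute_beta_of_apply_eq {g : Equiv.Perm Q} (hg : g ∈ s.transGroup) {x : Q}
    (hx : g x = x) : Commute (s.β x) g := by
  have h := s.beta_apply_eq_conj hg x
  rw [hx] at h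
  exact eq_mul_inv_iff_mul_eq.mp h

lemma exists_mem_Dis_apply_eq {g : Equiv.Perm Q} (hg : g ∈ s.transGroup) (x : Q) :
    ∃ v ∈ s.Dis, g x = v x := by
  induction hg using Subgroup.closure_induction generalizing x with
  | mem _ h =>
    obtain ⟨y, rfl⟩ := h
    exact ⟨s.β y * (s.β x)⁻¹, Subgroup.subset_closure ⟨y, x, rfl⟩,
      by rw [Equiv.Perm.mul_apply, s.beta_inv_apply_self x]⟩
  | one => exact ⟨1, one_mem _, rfl⟩
  | mul a b _ _ ha hb =>
    obtain ⟨v, hv, hbx⟩ := hb x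
    obtain ⟨w, hw, hav⟩ := ha (v x)
    exact ⟨w * v, mul_mem hw hv, by rw [Equiv.Perm.mul_apply, hbx, hav, Equiv.Perm.mul_apply]⟩
  | inv a _ ha =>
    obtain ⟨w, hw, h⟩ := ha (a⁻¹ x)
    refine ⟨w⁻¹, inv_mem hw, Equiv.Perm.eq_inv_iff_eq.mpr ?_⟩
    rw [← h]
    exact a.apply_symm_apply x

lemma mem_orbit_iff {q x : Q} : x ∈ s.orbit q ↔ ∃ v ∈ s.Dis, v q = x := by
  constructor
  · rintro ⟨g, hg, rfl⟩
    obtain ⟨v, hv, h⟩ := s.exists_mem_Dis_apply_eq hg q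
    exact ⟨v, hv, h.symm⟩
  · rintro ⟨v, hv, rfl⟩
    exact ⟨v, s.Dis_le_transGroup hv, rfl⟩

end MedialQuandleStr

section AddToMul

variable {A G : Type*} [Group G] {f : A → G}

lemma map_sub_of_map_add [AddGroup A] (hf : ∀ a b, f (a + b) = f a * f b) (a b : A) :
    f (a - b) = f a * (f b)⁻¹ :=
  (map_div (MonoidHom.mk' (f ∘ Multiplicative.toAdd) fun a b => hf a.toAdd b.toAdd)
    (.ofAdd a) (.ofAdd b)).trans (div_eq_mul_inv _ _)

lemma map_eq_mul_map_sub [AddCommGroup A] (hf : ∀ a b, f (a + b) = f a * f b) (a b : A) :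
    f a = f b * f (a - b) := by
  rw [← hf, add_sub_cancel]

end AddToMul

section Representation

variable {Q : Type*} {s : MedialQuandleStr Q} {D : Type*} [AddCommGroup D] [Module Λ D]
  (e : D ≃ s.Dis) {I : Type*} (q : I → Q)

lemma tL_smul_eq_self_of_apply_eq
    (hsmul : ∀ (a : D) (q' : Q), (e (tL • a)).val = s.β q' * (e a).val * (s.β q')⁻¹)
    {a : D} {x : Q} (ha : (e a).val x = x) : tL • a = a :=
  e.injective <| Subtype.ext <| (hsmul a x).trans
    (s.commute_beta_of_apply_eq (s.Dis_le_transGroup (e a).2) ha).mul_inv_cancel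

lemma annCond_of_apply_eq
    (hsmul : ∀ (a : D) (q' : Q), (e (tL • a)).val = s.β q' * (e a).val * (s.β q')⁻¹)
    {N : Submodule Λ D} {X : I → Submodule Λ N}
    (hX : ∀ i, ∀ a ∈ X i, (e a.val).val (q i) = q i) : annCond N X := by
  intro i a ha
  ext
  rw [Submodule.coe_smul, sub_smul, one_smul, tL_smul_eq_self_of_apply_eq e hsmul (hX i a ha),
    sub_self, ZeroMemClass.coe_zero]

lemma apply_eq_apply_iff_sub_mem (hadd : ∀ a b : D, (e (a + b)).val = (e a).val * (e b).val)
    {N : Submodule Λ D} {X : I → Submodule Λ N}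
    (hX : ∀ (i : I) (a : N), a ∈ X i ↔ (e a.val).val (q i) = q i) {i : I} {a b : N} :
    (e a.val).val (q i) = (e b.val).val (q i) ↔ a - b ∈ X i := by
  rw [hX, map_eq_mul_map_sub (f := fun a => (e a).val) hadd a.val b.val, Equiv.Perm.mul_apply,
    (e b.val).val.injective.eq_iff, Submodule.coe_sub]

lemma coe_apply_qop_rep (hadd : ∀ a b : D, (e (a + b)).val = (e a).val * (e b).val)
    (hsmul : ∀ (a : D) (q' : Q), (e (tL • a)).val = s.β q' * (e a).val * (s.β q')⁻¹)
    {i₀ : I} (d : I → D) (hd : ∀ i, (e (d i)).val = s.β (q i) * (s.β (q i₀))⁻¹)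
    (i j : I) (a b : D) :
    (e (d j - d i + tL • a + (1 - tL) • b)).val
      = (e b).val * s.β (q j) * (e b).val⁻¹ * (e a).val * (s.β (q i))⁻¹ := by
  have hsub := map_sub_of_map_add (f := fun a => (e a).val) hadd
  rw [show d j - d i + tL • a + (1 - tL) • b = (b - tL • b) + (d j - d i + tL • a) by
      rw [sub_smul, one_smul]; abel,
    hadd, hadd, hsub, hsub, hsmul b (q j), hsmul a (q i), hd, hd]
  group

def evalRep (hadd : ∀ a b : D, (e (a + b)).val = (e a).val * (e b).val)
    {N : Submodule Λ D} {X : I → Submodule Λ N}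
    (hX : ∀ (i : I) (a : N), a ∈ X i ↔ (e a.val).val (q i) = q i) : QCar N X → Q :=
  fun x => Quotient.liftOn' x.2 (fun a => (e a.val).val (q x.1)) fun _ _ hab =>
    (apply_eq_apply_iff_sub_mem e q hadd hX).mpr ((Submodule.quotientRel_def _).mp hab)

variable (hadd : ∀ a b : D, (e (a + b)).val = (e a).val * (e b).val)
  {N : Submodule Λ D} {X : I → Submodule Λ N}
  (hX : ∀ (i : I) (a : N), a ∈ X i ↔ (e a.val).val (q i) = q i)

@[simp]
lemma evalRep_mk (i : I) (a : N) :
    evalRep e q hadd hX ⟨i, Submodule.Quotient.mk a⟩ = (e a.val).val (q i) := rfl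

lemma evalRep_injective
    (horb : ∀ x i j, x ∈ s.orbit (q i) → x ∈ s.orbit (q j) → i = j) :
    Function.Injective (evalRep e q hadd hX) := by
  rintro ⟨i, x⟩ ⟨j, y⟩ h
  obtain ⟨a, rfl⟩ := Submodule.Quotient.mk_surjective _ x
  obtain ⟨b, rfl⟩ := Submodule.Quotient.mk_surjective _ y
  rw [evalRep_mk, evalRep_mk] at h
  have hmem (k : I) (c : N) : (e c.val).val (q k) ∈ s.orbit (q k) :=
    s.mem_orbit_iff.mpr ⟨_, (e c.val).2, rfl⟩
  obtain rfl : i = j := horb _ i j (hmem i a) (h ▸ hmem j b)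
  rw [(Submodule.Quotient.eq _).mpr ((apply_eq_apply_iff_sub_mem e q hadd hX).mp h)]

lemma evalRep_qop
    (hsmul : ∀ (a : D) (q' : Q), (e (tL • a)).val = s.β q' * (e a).val * (s.β q')⁻¹)
    {i₀ : I} (d : I → D) (hd : ∀ i, (e (d i)).val = s.β (q i) * (s.β (q i₀))⁻¹)
    (hm : ∀ i j, d i - d j ∈ N) (hann : annCond N X) (x y : QCar N X) :
    evalRep e q hadd hX (qop N d hm hann x y)
      = s.op (evalRep e q hadd hX x) (evalRep e q hadd hX y) := by
  obtain ⟨i, x⟩ := x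
  obtain ⟨j, y⟩ := y
  obtain ⟨a, rfl⟩ := Submodule.Quotient.mk_surjective _ x
  obtain ⟨b, rfl⟩ := Submodule.Quotient.mk_surjective _ y
  have hrep : qop N d hm hann ⟨i, Submodule.Quotient.mk a⟩ ⟨j, Submodule.Quotient.mk b⟩
      = ⟨i, Submodule.Quotient.mk (⟨d j - d i, hm j i⟩ + tL • a + (1 - tL) • b)⟩ := rfl
  rw [hrep, evalRep_mk, evalRep_mk, evalRep_mk, Submodule.coe_add, Submodule.coe_add,
    Submodule.coe_smul, Submodule.coe_smul, coe_apply_qop_rep e q hadd hsmul d hd,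
    ← MedialQuandleStr.beta_apply, s.beta_apply_eq_conj (s.Dis_le_transGroup (e b.val).2)]
  simp only [Equiv.Perm.mul_apply, s.beta_inv_apply_self]

lemma evalRep_surjective {X : I → Submodule Λ (⊤ : Submodule Λ D)}
    (hX : ∀ (i : I) (a : (⊤ : Submodule Λ D)), a ∈ X i ↔ (e a.val).val (q i) = q i)
    (horb : ∀ x, ∃ i, x ∈ s.orbit (q i)) :
    Function.Surjective (evalRep e q hadd hX) := by
  intro x
  obtain ⟨i, hi⟩ := horb x
  obtain ⟨v, hv, rfl⟩ := s.mem_orbit_iff.mp hi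
  exact ⟨⟨i, Submodule.Quotient.mk ⟨e.symm ⟨v, hv⟩, Submodule.mem_top⟩⟩, by simp⟩

end Representation

theorem stmt6_general {Q : Type*} (s : MedialQuandleStr Q) {I : Type*}
    (q : I → Q) (horb : ∀ x : Q, ∃! i : I, x ∈ s.orbit (q i)) (i₀ : I)
    {D : Type*} [AddCommGroup D] [Module Λ D]
    (e : D ≃ ↥s.Dis)
    (hadd : ∀ a b : D, (e (a + b)).val = (e a).val * (e b).val)
    (hsmul : ∀ (a : D) (q' : Q), (e (tL • a)).val = s.β q' * (e a).val * (s.β q')⁻¹)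
    (d : I → D) (hd : ∀ i, (e (d i)).val = s.β (q i) * (s.β (q i₀))⁻¹)
    (X : I → Submodule Λ ↥(⊤ : Submodule Λ D))
    (hX : ∀ (i : I) (a : ↥(⊤ : Submodule Λ D)), a ∈ X i ↔ (e a.val).val (q i) = q i) :
    ∃ (hm : ∀ i j : I, d i - d j ∈ (⊤ : Submodule Λ D))
      (hann : annCond (⊤ : Submodule Λ D) X)
      (F : QCar (⊤ : Submodule Λ D) X ≃ Q),
      ∀ x y, F (qop (⊤ : Submodule Λ D) d hm hann x y) = s.op (F x) (F y) := by
  have hann : annCond ⊤ X := annCond_of_apply_eq e q hsmul fun i a => (hX i a).mp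
  have hbij : Function.Bijective (evalRep e q hadd hX) :=
    ⟨evalRep_injective e q hadd hX fun x _ _ => (horb x).unique,
      evalRep_surjective e q hadd hX fun x => (horb x).exists⟩
  exact ⟨fun _ _ => Submodule.mem_top, hann, Equiv.ofBijective _ hbij,
    evalRep_qop e q hadd hX hsmul d hd _ hann⟩

/-- Every medial quandle is an instance of the construction: if the
orbits of `Q` are indexed by a nonempty set `I` with chosen representatives `q i`, `i₀`
is a fixed index, `D` is the `Λ`-module `Dis(Q)` (presented as an abstract `Λ`-module
together with a bijection `e` to `Dis(Q)` translating addition into composition and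
scalar multiplication by `t` into conjugation by a translation), `d i` corresponds to
the elementary displacement `β_{q i} β_{q i₀}⁻¹`, and `X i` corresponds to
`Fix(q i)`, then the data `(Dis(Q), (d i), (Fix (q i)))` satisfy the hypotheses of the
construction and `Q(Dis(Q), (d i), (Fix (q i)))` is isomorphic to `Q` as a quandle. -/
theorem stmt6 {Q : Type*} (s : MedialQuandleStr Q) {I : Type*} [Nonempty I]
    (q : I → Q) (horb : ∀ x : Q, ∃! i : I, x ∈ s.orbit (q i)) (i₀ : I)
    {D : Type*} [AddCommGroup D] [Module Λ D]
    (e : D ≃ ↥s.Dis)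
    (hadd : ∀ a b : D, (e (a + b)).val = (e a).val * (e b).val)
    (hsmul : ∀ (a : D) (q' : Q), (e (tL • a)).val = s.β q' * (e a).val * (s.β q')⁻¹)
    (d : I → D) (hd : ∀ i, (e (d i)).val = s.β (q i) * (s.β (q i₀))⁻¹)
    (X : I → Submodule Λ ↥(⊤ : Submodule Λ D))
    (hX : ∀ (i : I) (a : ↥(⊤ : Submodule Λ D)), a ∈ X i ↔ (e a.val).val (q i) = q i) :
    ∃ (hm : ∀ i j : I, d i - d j ∈ (⊤ : Submodule Λ D))
      (hann : annCond (⊤ : Submodule Λ D) X)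
      (F : QCar (⊤ : Submodule Λ D) X ≃ Q),
      ∀ x y, F (qop (⊤ : Submodule Λ D) d hm hann x y) = s.op (F x) (F y) :=
  stmt6_general s q horb i₀ e hadd hsmul d hd X hX
end
end

section
/- Let Q = Q(N,(m_i),(X_i)) be the quandle of the construction and let g be any quandle homomorphism from Q to an involutory quandle. Then: (a) for every i ∈ I, x ∈ Q_i and n ∈ N, g(x + (1−t²)·n + X_i) = g(x); and (b) for every k ∈ I, x ∈ Q_k, all i, j ∈ I, and every integer p, g(x + p·(1+t)·(m_j − m_i) + X_k) = g(x). -/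
open LaurentPolynomial

set_option synthInstance.maxHeartbeats 1000000
set_option maxHeartbeats 1000000

noncomputable section

/-! Since the target is involutory, `g` is invariant under `x ↦ (x ▷ y) ▷ y`, which on `Q_k`
with `y = n + X_j` is the affine map `x ↦ (1+t)(m_j - m_k) + (1-t²)n + t²x`. As `t²` is a unit,
invariance under two affine maps with the same linear part `t²` makes `g` periodic with the
difference of their translation parts: `(1-t²)n` (take `j = k` and compare `n` with `0`) and
`(1+t)(m_j - m_i)` (take `n = 0` and compare `j` with `i`). -/

theorem Function.periodic_sub_of_affine_invariant {R V α : Type*} [Ring R] [AddCommGroup V]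
    [Module R V] {f : V → α} {r : R} (hr : IsUnit r) {c c' : V}
    (hc : ∀ u, f (c + r • u) = f u) (hc' : ∀ u, f (c' + r • u) = f u) :
    Function.Periodic f (c - c') := by
  obtain ⟨r, rfl⟩ := hr
  intro x
  obtain ⟨w, hw⟩ : ∃ w, (r : R) • w = x - c' := ⟨r⁻¹ • (x - c'), smul_inv_smul r _⟩
  calc f (x + (c - c')) = f (c + (r : R) • w) := by rw [hw, add_sub_left_comm]
    _ = f (c' + (r : R) • w) := by rw [hc, hc']
    _ = f x := by rw [hw, add_sub_cancel]

theorem isUnit_tL_sq : IsUnit (tL ^ 2) :=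
  (isUnit_T 1).pow 2

section Construction

variable {M : Type*} [AddCommGroup M] [Module Λ M] {I : Type*}
  {N : Submodule Λ M} {m : I → M} {X : I → Submodule Λ ↥N}
  (hm : ∀ i j, m i - m j ∈ N) (h : annCond N X)

abbrev diffClass (k j : I) : ↥N ⧸ X k :=
  Submodule.Quotient.mk (⟨m j - m k, hm j k⟩ : ↥N)

theorem diffClass_self (k : I) : (diffClass hm k k : ↥N ⧸ X k) = 0 := by
  have hzero : (⟨m k - m k, hm k k⟩ : ↥N) = 0 := Subtype.ext (sub_self _)
  simp only [diffClass, hzero, Submodule.Quotient.mk_zero]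

theorem mk_diff_eq_diffClass_sub (k i j : I) :
    (Submodule.Quotient.mk (⟨m j - m i, hm j i⟩ : ↥N) : ↥N ⧸ X k)
      = diffClass hm k j - diffClass hm k i := by
  rw [← Submodule.Quotient.mk_sub]
  congr 1
  ext
  simp

theorem oneSubT_mk (j : I) (n : ↥N) :
    oneSubT N h j (Submodule.Quotient.mk n) = (1 - tL) • n := by
  simp [oneSubT]

theorem qop_mk (k j : I) (x : ↥N ⧸ X k) (n : ↥N) :
    qop N m hm h ⟨k, x⟩ ⟨j, Submodule.Quotient.mk n⟩
      = ⟨k, diffClass hm k j + tL • x + (1 - tL) • Submodule.Quotient.mk n⟩ := by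
  simp only [qop, oneSubT_mk, Submodule.Quotient.mk_smul]
  rfl

theorem qop_qop_mk (k j : I) (x : ↥N ⧸ X k) (n : ↥N) :
    qop N m hm h (qop N m hm h ⟨k, x⟩ ⟨j, Submodule.Quotient.mk n⟩)
        ⟨j, Submodule.Quotient.mk n⟩ = ⟨k, ((1 + tL) • diffClass hm k j + (1 - tL ^ 2) • Submodule.Quotient.mk n)
          + tL ^ 2 • x⟩ := by
  rw [qop_mk, qop_mk]
  congr 1
  module

variable {T' : Type*} {qt : QuandleStr T'} {g : QCar N X → T'}

theorem apply_affine_eq (hinv : ∀ a b : T', qt.op (qt.op a b) b = a)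
    (hg : ∀ x y, g (qop N m hm h x y) = qt.op (g x) (g y)) (k j : I) (n : ↥N)
    (x : ↥N ⧸ X k) :
    g ⟨k, ((1 + tL) • diffClass hm k j + (1 - tL ^ 2) • Submodule.Quotient.mk n)
      + tL ^ 2 • x⟩ = g ⟨k, x⟩ := by
  rw [← qop_qop_mk hm h]
  exact (hg _ _).trans ((congrArg (qt.op · _) (hg _ _)).trans (hinv _ _))

end Construction

theorem stmt17_general {M : Type*} [AddCommGroup M] [Module Λ M] {I : Type*}
    (N : Submodule Λ M) (m : I → M) (X : I → Submodule Λ ↥N)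
    (hm : ∀ i j, m i - m j ∈ N) (h : annCond N X)
    {T' : Type*} (qt : QuandleStr T') (hinv : ∀ a b : T', qt.op (qt.op a b) b = a)
    (g : QCar N X → T')
    (hg : ∀ x y, g (qop N m hm h x y) = qt.op (g x) (g y)) :
    (∀ (i : I) (x : ↥N ⧸ X i) (n : ↥N),
      g ⟨i, x + Submodule.Quotient.mk ((1 - tL ^ 2) • n)⟩ = g ⟨i, x⟩) ∧
    (∀ (k : I) (x : ↥N ⧸ X k) (i j : I) (p : ℤ),
      g ⟨k, x + Submodule.Quotient.mk
          (p • ((1 + tL) • (⟨m j - m i, hm j i⟩ : ↥N)))⟩ = g ⟨k, x⟩) := by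
  have affine := apply_affine_eq hm h hinv hg
  constructor
  · intro i x n
    have hn := affine i i n
    have h0 := affine i i 0
    simp only [diffClass_self, smul_zero, zero_add] at hn
    simp only [diffClass_self, smul_zero, Submodule.Quotient.mk_zero, add_zero] at h0
    simpa [Submodule.Quotient.mk_smul] using
      Function.periodic_sub_of_affine_invariant (f := fun u => g ⟨i, u⟩) isUnit_tL_sq hn h0 x
  · intro k x i j p
    have hj := affine k j 0
    have hi := affine k i 0
    simp only [smul_zero, Submodule.Quotient.mk_zero, add_zero] at hj hi
    have hper := (Function.periodic_sub_of_affine_invariant (f := fun u => g ⟨k, u⟩)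
      isUnit_tL_sq hj hi).zsmul p x
    rwa [← smul_sub, ← mk_diff_eq_diffClass_sub, ← Submodule.Quotient.mk_smul,
      ← Submodule.Quotient.mk_smul] at hper

/-- Let `Q = Q(N,(m_i),(X_i))` and let `g` be any quandle
homomorphism from `Q` to an involutory quandle. Then (a) `g(x + (1-t²)·n + X_i) = g(x)`
for every `i ∈ I`, `x ∈ Q_i` and `n ∈ N`; and (b)
`g(x + p·(1+t)·(m_j - m_i) + X_k) = g(x)` for every `k ∈ I`, `x ∈ Q_k`, `i, j ∈ I`
and every integer `p`. -/
theorem stmt17 {M : Type*} [AddCommGroup M] [Module Λ M] {I : Type*} [Nonempty I]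
    (N : Submodule Λ M) (m : I → M) (X : I → Submodule Λ ↥N)
    (hm : ∀ i j, m i - m j ∈ N) (h : annCond N X)
    {T' : Type*} (qt : QuandleStr T') (hinv : ∀ a b : T', qt.op (qt.op a b) b = a)
    (g : QCar N X → T')
    (hg : ∀ x y, g (qop N m hm h x y) = qt.op (g x) (g y)) :
    (∀ (i : I) (x : ↥N ⧸ X i) (n : ↥N),
      g ⟨i, x + Submodule.Quotient.mk ((1 - tL ^ 2) • n)⟩ = g ⟨i, x⟩) ∧
    (∀ (k : I) (x : ↥N ⧸ X k) (i j : I) (p : ℤ),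
      g ⟨k, x + Submodule.Quotient.mk
          (p • ((1 + tL) • (⟨m j - m i, hm j i⟩ : ↥N)))⟩ = g ⟨k, x⟩) :=
  stmt17_general N m X hm h qt hinv g hg
end
end
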